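/- Assume all spins equal one, s_j = 1 for j = 1, …, n, and assume the Bethe equations hold. Write S′(ε_i) = −Σ_{k=1}^M 1/(ε_i − μ_k)². Then for every i = 1, …, n the following two closed equations hold: (i) S′(ε_i) + S(ε_i)² + (2/(ħ g²))((2ε_i − ω)S(ε_i) − 2M) = 2S′(ε_i) + 2Σ_{j≠i} (S(ε_i) − S(ε_j))/(ε_i − ε_j); (ii) 2S(ε_i)S′(ε_i) + (2/(ħ g²))((2ε_i − ω)S′(ε_i) + 2S(ε_i)) = 2Σ_{j≠i} [ S′(ε_i)/(ε_i − ε_j) − (S(ε_i) − S(ε_j))/(ε_i − ε_j)² ]. -/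

import Mathlib

/-!
Multiply the `m`-th Bethe equation by `(ε_i - μ_m)⁻¹`, respectively `(ε_i - μ_m)⁻²`, and sum
over `m`. Symmetrizing in `m ↔ k` turns the double sums over pairs of roots `μ_m, μ_k` into
products of the power sums `Σ_m (ε_i - μ_m)⁻ᵖ`, while partial fractions turn the sums against
the poles `ε_j` into divided differences of `S` for `j ≠ i`, and into `S'(ε_i)` (resp. the third
power sum) for `j = i`. The third power sums cancel between the two kinds of terms.
-/

open Finset

section Symmetrization

variable {ι : Type*} [Fintype ι] [DecidableEq ι]

theorem sum_sum_erase_comm {R : Type*} [AddCommMonoid R] (f : ι → ι → R) :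
    ∑ m, ∑ k ∈ univ.erase m, f m k = ∑ m, ∑ k ∈ univ.erase m, f k m :=
  sum_comm' fun _ _ => by simp [ne_comm]

theorem sum_sum_erase_add_swap {R : Type*} [NonAssocSemiring R] (f : ι → ι → R) :
    ∑ m, ∑ k ∈ univ.erase m, (f m k + f k m) = 2 * ∑ m, ∑ k ∈ univ.erase m, f m k := by
  simp only [sum_add_distrib, ← sum_sum_erase_comm (fun m k => f k m), two_mul]

theorem sum_sum_erase_mul {R : Type*} [NonUnitalNonAssocRing R] (x y : ι → R) :
    ∑ m, ∑ k ∈ univ.erase m, x m * y k = (∑ m, x m) * (∑ k, y k) - ∑ m, x m * y m := by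
  simp only [← mul_sum, sum_mul, ← sum_sub_distrib, sum_erase_eq_sub (mem_univ _)]

end Symmetrization

section InvPowSum

variable {ι : Type*} [Fintype ι] {𝕜 : Type*} [Field 𝕜]

/-- `invPowSum μ 1` is the paper's `S`, and `-invPowSum μ 2` is `S'`. -/
def invPowSum (μ : ι → 𝕜) (p : ℕ) (z : 𝕜) : 𝕜 := ∑ m, 1 / (z - μ m) ^ p

variable {μ : ι → 𝕜} {z : 𝕜}

theorem invPowSum_eq_sum_pow (μ : ι → 𝕜) (p : ℕ) (z : 𝕜) :
    invPowSum μ p z = ∑ m, (1 / (z - μ m)) ^ p := by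
  simp only [invPowSum, div_pow, one_pow]

theorem invPowSum_zero (μ : ι → 𝕜) (z : 𝕜) : invPowSum μ 0 z = Fintype.card ι := by
  simp [invPowSum]

theorem sum_two_mul_sub_div_pow (hz : ∀ m, z ≠ μ m) (ω : 𝕜) (p : ℕ) :
    ∑ m, (2 * μ m - ω) / (z - μ m) ^ (p + 1)
      = (2 * z - ω) * invPowSum μ (p + 1) z - 2 * invPowSum μ p z := by
  simp only [invPowSum, mul_sum, ← sum_sub_distrib]
  refine sum_congr rfl fun m _ => ?_
  have := sub_ne_zero.2 (hz m)
  field_simp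
  ring

theorem sum_one_div_sub_div_sub_self (p : ℕ) :
    ∑ m, 1 / (μ m - z) / (z - μ m) ^ p = -invPowSum μ (p + 1) z := by
  simp only [invPowSum, ← sum_neg_distrib]
  refine sum_congr rfl fun m _ => ?_
  rw [← neg_sub z, one_div_neg_eq_neg_one_div, neg_div, div_div, ← pow_succ']

theorem sum_one_div_sub_div_sub {w : 𝕜} (hzw : z ≠ w) (hz : ∀ m, z ≠ μ m)
    (hw : ∀ m, w ≠ μ m) :
    ∑ m, 1 / (μ m - w) / (z - μ m) = (invPowSum μ 1 z - invPowSum μ 1 w) / (z - w) := by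
  simp only [invPowSum, pow_one, ← sum_sub_distrib, sum_div]
  refine sum_congr rfl fun m _ => ?_
  have := sub_ne_zero.2 (hz m)
  have := sub_ne_zero.2 (hw m)
  have := sub_ne_zero.2 hzw
  have := sub_ne_zero.2 (hw m).symm
  field_simp
  ring

theorem sum_one_div_sub_div_sub_sq {w : 𝕜} (hzw : z ≠ w) (hz : ∀ m, z ≠ μ m)
    (hw : ∀ m, w ≠ μ m) :
    ∑ m, 1 / (μ m - w) / (z - μ m) ^ 2
      = (invPowSum μ 1 z - invPowSum μ 1 w) / (z - w) ^ 2 + invPowSum μ 2 z / (z - w) := by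
  simp only [invPowSum, pow_one, ← sum_sub_distrib, sum_div, ← sum_add_distrib]
  refine sum_congr rfl fun m _ => ?_
  have := sub_ne_zero.2 (hz m)
  have := sub_ne_zero.2 (hw m)
  have := sub_ne_zero.2 hzw
  have := sub_ne_zero.2 (hw m).symm
  field_simp
  ring

variable [DecidableEq ι]

theorem two_mul_sum_sum_erase_one_div_sub_div_sub (hμ : Function.Injective μ)
    (hz : ∀ m, z ≠ μ m) :
    2 * ∑ m, ∑ k ∈ univ.erase m, 1 / (μ m - μ k) / (z - μ m)
      = invPowSum μ 1 z ^ 2 - invPowSum μ 2 z := by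
  have pair : ∀ m, ∀ k ∈ univ.erase m,
      1 / (μ m - μ k) / (z - μ m) + 1 / (μ k - μ m) / (z - μ k)
        = 1 / (z - μ m) * (1 / (z - μ k)) := by
    intro m k hk
    have := sub_ne_zero.2 (hμ.ne (mem_erase.1 hk).1.symm)
    have := sub_ne_zero.2 (hμ.ne (mem_erase.1 hk).1)
    have := sub_ne_zero.2 (hz m)
    have := sub_ne_zero.2 (hz k)
    field_simp
    ring
  rw [← sum_sum_erase_add_swap, sum_congr rfl fun m _ => sum_congr rfl (pair m),
    sum_sum_erase_mul, invPowSum_eq_sum_pow, invPowSum_eq_sum_pow]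
  simp only [sq, pow_one]

theorem sum_sum_erase_one_div_sub_div_sub_sq [NeZero (2 : 𝕜)] (hμ : Function.Injective μ)
    (hz : ∀ m, z ≠ μ m) :
    ∑ m, ∑ k ∈ univ.erase m, 1 / (μ m - μ k) / (z - μ m) ^ 2
      = invPowSum μ 2 z * invPowSum μ 1 z - invPowSum μ 3 z := by
  have pair : ∀ m, ∀ k ∈ univ.erase m,
      1 / (μ m - μ k) / (z - μ m) ^ 2 + 1 / (μ k - μ m) / (z - μ k) ^ 2
        = (1 / (z - μ m)) ^ 2 * (1 / (z - μ k)) + (1 / (z - μ k)) ^ 2 * (1 / (z - μ m)) := by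
    intro m k hk
    have := sub_ne_zero.2 (hμ.ne (mem_erase.1 hk).1.symm)
    have := sub_ne_zero.2 (hμ.ne (mem_erase.1 hk).1)
    have := sub_ne_zero.2 (hz m)
    have := sub_ne_zero.2 (hz k)
    field_simp
    ring
  rw [← mul_right_inj' (two_ne_zero (α := 𝕜)), ← sum_sum_erase_add_swap,
    sum_congr rfl fun m _ => sum_congr rfl (pair m)]
  simp only [sum_add_distrib, sum_sum_erase_comm (fun m k => (1 / (z - μ k)) ^ 2 * (1 / (z - μ m)))]
  rw [sum_sum_erase_mul, invPowSum_eq_sum_pow, invPowSum_eq_sum_pow, invPowSum_eq_sum_pow]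
  simp only [pow_one]
  ring_nf

end InvPowSum

section Bethe

variable {ι κ : Type*} [Fintype ι] [DecidableEq ι] [Fintype κ] {𝕜 : Type*} [Field 𝕜]

/-- The Bethe equations for spins `s_j = 1`, multiplied by `g²`; `c` stands for `ħ g²`. -/
def SpinOneBetheEquations (c ω : 𝕜) (ε : κ → 𝕜) (μ : ι → 𝕜) : Prop :=
  ∀ m, 2 * μ m - ω = c * (∑ j, 1 / (μ m - ε j) - ∑ k ∈ univ.erase m, 1 / (μ m - μ k))

variable {c ω : 𝕜} {ε : κ → 𝕜} {μ : ι → 𝕜}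

theorem spinOneBetheEquations_of_bethe {hbar g : 𝕜} {a : 𝕜 → 𝕜} (hg : g ≠ 0)
    (ha : ∀ z, a z = (2 * z - ω) / g ^ 2 - ∑ j, hbar / (z - ε j))
    (bethe : ∀ m, a (μ m) + ∑ k ∈ univ.erase m, hbar / (μ m - μ k) = 0) :
    SpinOneBetheEquations (hbar * g ^ 2) ω ε μ := by
  intro m
  have hb := bethe m
  simp only [ha, div_eq_mul_one_div hbar, ← mul_sum] at hb
  field_simp at hb
  linear_combination hb

variable [DecidableEq κ]

theorem SpinOneBetheEquations.sum_div_pow (h : SpinOneBetheEquations c ω ε μ) (i : κ)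
    (p : ℕ) :
    ∑ m, (2 * μ m - ω) / (ε i - μ m) ^ p
      = c * (∑ j ∈ univ.erase i, ∑ m, 1 / (μ m - ε j) / (ε i - μ m) ^ p
          - invPowSum μ (p + 1) (ε i)
          - ∑ m, ∑ k ∈ univ.erase m, 1 / (μ m - μ k) / (ε i - μ m) ^ p) := by
  simp only [h _, mul_div_assoc, ← mul_sum, sub_div, sum_sub_distrib, sum_div]
  rw [sum_comm, ← sum_erase_add _ _ (mem_univ i), sum_one_div_sub_div_sub_self,
    ← sub_eq_add_neg]

theorem SpinOneBetheEquations.closed_equation_one (h : SpinOneBetheEquations c ω ε μ)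
    (hc : c ≠ 0) (hε : Function.Injective ε) (hμ : Function.Injective μ)
    (hμε : ∀ m j, μ m ≠ ε j) (i : κ) :
    -invPowSum μ 2 (ε i) + invPowSum μ 1 (ε i) ^ 2
        + 2 / c * ((2 * ε i - ω) * invPowSum μ 1 (ε i) - 2 * Fintype.card ι)
      = 2 * -invPowSum μ 2 (ε i)
        + 2 * ∑ j ∈ univ.erase i, (invPowSum μ 1 (ε i) - invPowSum μ 1 (ε j)) / (ε i - ε j) := by
  have hz : ∀ j m, ε j ≠ μ m := fun j m => (hμε m j).symm
  have hbethe := h.sum_div_pow i 1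
  have haffine := sum_two_mul_sub_div_pow (hz i) ω 0
  simp only [pow_one, zero_add, Nat.reduceAdd, invPowSum_zero] at hbethe haffine
  rw [haffine, sum_congr rfl fun j hj => sum_one_div_sub_div_sub
      (hε.ne (mem_erase.1 hj).1.symm) (hz i) (hz j)] at hbethe
  have hpair := two_mul_sum_sum_erase_one_div_sub_div_sub hμ (hz i)
  field_simp
  linear_combination 2 * hbethe - c * hpair

theorem SpinOneBetheEquations.closed_equation_two [NeZero (2 : 𝕜)]
    (h : SpinOneBetheEquations c ω ε μ) (hc : c ≠ 0) (hε : Function.Injective ε)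
    (hμ : Function.Injective μ) (hμε : ∀ m j, μ m ≠ ε j) (i : κ) :
    2 * invPowSum μ 1 (ε i) * -invPowSum μ 2 (ε i)
        + 2 / c * ((2 * ε i - ω) * -invPowSum μ 2 (ε i) + 2 * invPowSum μ 1 (ε i))
      = 2 * ∑ j ∈ univ.erase i, (-invPowSum μ 2 (ε i) / (ε i - ε j)
          - (invPowSum μ 1 (ε i) - invPowSum μ 1 (ε j)) / (ε i - ε j) ^ 2) := by
  have hz : ∀ j m, ε j ≠ μ m := fun j m => (hμε m j).symm
  have hbethe := h.sum_div_pow i 2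
  rw [sum_two_mul_sub_div_pow (hz i) ω 1, sum_sum_erase_one_div_sub_div_sub_sq hμ (hz i),
    sum_congr rfl fun j hj => sum_one_div_sub_div_sub_sq
      (hε.ne (mem_erase.1 hj).1.symm) (hz i) (hz j)] at hbethe
  simp only [neg_div, neg_sub_left, sum_neg_distrib, Nat.reduceAdd] at hbethe ⊢
  generalize ∑ j ∈ univ.erase i, ((invPowSum μ 1 (ε i) - invPowSum μ 1 (ε j)) / (ε i - ε j) ^ 2
    + invPowSum μ 2 (ε i) / (ε i - ε j)) = T at hbethe ⊢
  field_simp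
  linear_combination -hbethe

end Bethe

/-- for spins one, the Bethe equations imply the two closed
equations for `S(ε_i)` and `S'(ε_i)`. -/
theorem closed_equations_spin_one
    (n M : ℕ) (hbar g ω : ℂ) (hhbar : hbar ≠ 0) (hg : g ≠ 0)
    (ε : Fin n → ℂ) (hε : Function.Injective ε) (s : Fin n → ℂ)
    (hs : ∀ j, s j = 1)
    (μ : Fin M → ℂ) (hμ : Function.Injective μ)
    (hμε : ∀ i j, μ i ≠ ε j)
    (a S S' : ℂ → ℂ)
    (ha : ∀ z, a z = (2 * z - ω) / g ^ 2 - ∑ j, hbar * s j / (z - ε j))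
    (hS : ∀ z, S z = ∑ i, 1 / (z - μ i))
    (hS' : ∀ i, S' (ε i) = -∑ k, 1 / (ε i - μ k) ^ 2)
    (bethe : ∀ i, a (μ i) + ∑ k ∈ Finset.univ.erase i, hbar / (μ i - μ k) = 0) :
    ∀ i,
      (S' (ε i) + (S (ε i)) ^ 2
          + (2 / (hbar * g ^ 2)) * ((2 * ε i - ω) * S (ε i) - 2 * M)
        = 2 * S' (ε i)
          + 2 * ∑ j ∈ Finset.univ.erase i, (S (ε i) - S (ε j)) / (ε i - ε j))
      ∧
      (2 * S (ε i) * S' (ε i)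
          + (2 / (hbar * g ^ 2)) * ((2 * ε i - ω) * S' (ε i) + 2 * S (ε i))
        = 2 * ∑ j ∈ Finset.univ.erase i,
            (S' (ε i) / (ε i - ε j) - (S (ε i) - S (ε j)) / (ε i - ε j) ^ 2)) := by
  intro i
  have hB : SpinOneBetheEquations (hbar * g ^ 2) ω ε μ :=
    spinOneBetheEquations_of_bethe hg (fun z => by simp [ha, hs]) bethe
  have hc : hbar * g ^ 2 ≠ 0 := mul_ne_zero hhbar (pow_ne_zero 2 hg)
  have hS₁ : ∀ z, S z = invPowSum μ 1 z := fun z => by simp [hS, invPowSum]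
  have hS₂ : S' (ε i) = -invPowSum μ 2 (ε i) := hS' i
  have hone := hB.closed_equation_one hc hε hμ hμε i
  rw [Fintype.card_fin] at hone
  simp only [hS₁, hS₂]
  exact ⟨hone, hB.closed_equation_two hc hε hμ hμε i⟩
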